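/- Let 0.5 < ε < 1 and c > 0 satisfy Q(c) ≤ 1 − ε^{1/2^n}. Then 2c² ≥ (1/2)[c + Q⁻¹((ε^{−1/2^n} − 1)·(1 − Q(c)))]². -/

import Mathlib

/-!
With `δ = ε ^ (1 / 2 ^ n) ∈ (1/2, 1)`, the argument `y = (δ⁻¹ - 1) * (1 - Q c)` of `Q⁻¹` lies
between `Q c` (this is the hypothesis `Q c ≤ 1 - δ`) and `1 - Q c = Q (-c)` (because `δ⁻¹ < 2`).
Since `Q` is continuous and strictly decreasing, `Q⁻¹ y ∈ [-c, c]`, so `(c + Q⁻¹ y)² ≤ 4c²`.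
-/

/-- The standard Gaussian tail function `Q(x) = (1/√(2π)) ∫ₓ^∞ e^{-t²/2} dt`. -/
noncomputable def gaussQ (x : ℝ) : ℝ :=
  ∫ t in Set.Ioi x, (1 / Real.sqrt (2 * Real.pi)) * Real.exp (-(t ^ 2) / 2)

/-- The inverse of the Gaussian tail function on `(0,1)`. -/
noncomputable def gaussQinv : ℝ → ℝ := Function.invFun gaussQ

open MeasureTheory ProbabilityTheory Set

lemma gaussQ_eq_setIntegral_gaussianPDFReal (x : ℝ) :
    gaussQ x = ∫ t in Ioi x, gaussianPDFReal 0 1 t := by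
  simp [gaussQ, gaussianPDFReal]

lemma gaussQ_strictAnti : StrictAnti gaussQ := by
  intro x y hxy
  have hφ := integrable_gaussianPDFReal 0 1
  rw [← sub_pos, gaussQ_eq_setIntegral_gaussianPDFReal, gaussQ_eq_setIntegral_gaussianPDFReal,
    intervalIntegral.integral_Ioi_sub_Ioi hφ.integrableOn hxy.le]
  exact intervalIntegral.intervalIntegral_pos_of_pos hφ.intervalIntegrable
    (gaussianPDFReal_pos 0 1 · one_ne_zero) hxy

lemma continuousOn_gaussQ_Ici (a : ℝ) : ContinuousOn gaussQ (Ici a) := by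
  simp only [funext gaussQ_eq_setIntegral_gaussianPDFReal]
  exact (integrable_gaussianPDFReal 0 1).integrableOn.continuousOn_Ici_primitive_Ioi

lemma gaussQ_add_gaussQ_neg (x : ℝ) : gaussQ x + gaussQ (-x) = 1 := by
  have hφ := integrable_gaussianPDFReal 0 1
  have h_refl : gaussQ x = ∫ t in Iic (-x), gaussianPDFReal 0 1 t := by
    rw [gaussQ_eq_setIntegral_gaussianPDFReal, ← integral_comp_neg_Ioi]
    simp [gaussianPDFReal]
  rw [h_refl, gaussQ_eq_setIntegral_gaussianPDFReal,
    intervalIntegral.integral_Iic_add_Ioi hφ.integrableOn hφ.integrableOn]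
  exact integral_gaussianPDFReal_eq_one 0 one_ne_zero

lemma gaussQinv_gaussQ (x : ℝ) : gaussQinv (gaussQ x) = x :=
  Function.leftInverse_invFun gaussQ_strictAnti.injective x

lemma gaussQinv_mem_Icc {a b y : ℝ} (hab : a ≤ b) (hy : y ∈ Icc (gaussQ b) (gaussQ a)) :
    gaussQinv y ∈ Icc a b := by
  obtain ⟨z, hz, rfl⟩ :=
    intermediate_value_Icc' hab ((continuousOn_gaussQ_Ici a).mono Icc_subset_Ici_self) hy
  rwa [gaussQinv_gaussQ]

lemma inv_sub_one_mul_one_sub_mem_Icc {δ q : ℝ} (hδ : 1 / 2 < δ) (hq : q ≤ 1 - δ) :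
    (δ⁻¹ - 1) * (1 - q) ∈ Icc q (1 - q) := by
  have hδ0 : 0 < δ := by linarith
  have hδ_inv : δ⁻¹ < 2 := by rw [inv_lt_comm₀ hδ0 two_pos]; linarith
  have h_lower : 1 ≤ δ⁻¹ * (1 - q) := by
    rw [inv_mul_eq_div, le_div_iff₀ hδ0]; linarith
  constructor <;> nlinarith

lemma half_mul_add_sq_le {c z : ℝ} (hz : z ∈ Icc (-c) c) : 1 / 2 * (c + z) ^ 2 ≤ 2 * c ^ 2 := by
  nlinarith [hz.1, hz.2]

/-- Inequality (39): if `0.5 < ε < 1` and `c > 0` satisfy `Q(c) ≤ 1 − ε^{1/2^n}`, then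
`2c² ≥ (1/2)[c + Q⁻¹((ε^{−1/2^n} − 1)·(1 − Q(c)))]²`. -/
theorem high_mean_constraint_reduces (n : ℕ) (ε c : ℝ)
    (hε0 : 0.5 < ε) (hε1 : ε < 1) (hc : 0 < c)
    (hQc : gaussQ c ≤ 1 - ε ^ ((1 : ℝ) / 2 ^ n)) :
    2 * c ^ 2 ≥
      (1 / 2) * (c + gaussQinv ((ε ^ (-((1 : ℝ) / 2 ^ n)) - 1) * (1 - gaussQ c))) ^ 2 := by
  set a : ℝ := 1 / 2 ^ n
  have hε_pos : 0 < ε := by norm_num at hε0; linarith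
  have ha : a ≤ 1 := div_le_one_of_le₀ (one_le_pow₀ one_le_two) (by positivity)
  have hεa : 1 / 2 < ε ^ a := by
    have := Real.rpow_le_rpow_of_exponent_ge hε_pos hε1.le ha
    rw [Real.rpow_one] at this
    norm_num at hε0 ⊢; linarith
  have h_upper : 1 - gaussQ c = gaussQ (-c) := by linarith [gaussQ_add_gaussQ_neg c]
  have hx := inv_sub_one_mul_one_sub_mem_Icc hεa hQc
  rw [Real.rpow_neg hε_pos.le]
  exact half_mul_add_sq_le <|
    gaussQinv_mem_Icc (neg_le_self hc.le) ⟨hx.1, hx.2.trans_eq h_upper⟩
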